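/- Let p be prime, F/ℚ_p finite unramified, and M ∈ I_d + π^{r}·M_{d×d}(B⁺_{F,rig}) a d×d matrix congruent to the identity modulo π^r, where 1 ≤ r ≤ p−1. Suppose M' = (t/π)^{r}·M^{−1} has entries in B⁺_{F,rig} and satisfies γ(M')·G_γ = M' for some G_γ ∈ I_d + π^{p−1}M_{d×d}(A⁺_F), where γ acts by π ↦ (1+π)^{χ(γ)} − 1 with χ(γ) ∈ 1 + pℤ_p a topological generator. If M' ≡ I_d mod π^j for some 1 ≤ j ≤ p−2, then M' ≡ I_d mod π^{j+1}; consequently M' ≡ I_d mod π^{p−1}. -/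

import Mathlib

/-!
Write `M' = 1 + π^j N`. Since `γ(π) = uπ + O(π²)`, the `π^j`-coefficient of `γ(π^j N)` is
`u^j · N(0)`, while `γ(M') - M' = -γ(M')·(G_γ - 1)` vanishes modulo `π^{p-1}`. For `j < p - 1`
comparing `π^j`-coefficients gives `(u^j - 1)·N(0) = 0`, and `u^j ≠ 1` because `u ≡ 1 (mod p)`,
`u ≠ 1` and `p ∤ j`. The induction starts at `j = 1`: reducing `M'·M = (t/π)^r` modulo `π`
gives `M'(0) = 1`.
-/

open PowerSeries

/-- The generalized binomial coefficient `C(u, k) = u(u−1)⋯(u−k+1)/k!` in `ℚ_p`. -/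
noncomputable def padicBinom (p : ℕ) [Fact p.Prime] (u : ℚ_[p]) (k : ℕ) : ℚ_[p] :=
  (∏ i ∈ Finset.range k, (u - (i : ℚ_[p]))) / (k.factorial : ℚ_[p])

/-- The binomial power series `(1+π)^u = Σ_k C(u,k) π^k ∈ ℚ_p[[π]]` for `u ∈ ℤ_p`. -/
noncomputable def onePlusXPow (p : ℕ) [Fact p.Prime] (u : ℚ_[p]) : PowerSeries ℚ_[p] :=
  PowerSeries.mk fun k => padicBinom p u k

/-- The power series `t/π = log(1+π)/π = Σ_k (−1)^k π^k/(k+1) ∈ ℚ_p[[π]]`. -/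
noncomputable def tDivPi (p : ℕ) [Fact p.Prime] : PowerSeries ℚ_[p] :=
  PowerSeries.mk fun k => (-1 : ℚ_[p]) ^ k / (k + 1)

namespace PowerSeries

variable {R : Type*} [CommRing R]

theorem coeff_pow_mul_of_constantCoeff_eq_zero {g : R⟦X⟧} (hg : constantCoeff g = 0)
    (j : ℕ) (f : R⟦X⟧) : coeff j (g ^ j * f) = coeff 1 g ^ j * constantCoeff f := by
  obtain ⟨h, rfl⟩ := X_dvd_iff.mpr hg
  rw [mul_pow, mul_assoc, coeff_succ_X_mul, coeff_zero_eq_constantCoeff]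
  simpa using coeff_X_pow_mul (h ^ j * f) j 0

variable {γ : R⟦X⟧ →ₐ[R] R⟦X⟧}

theorem constantCoeff_algHom_apply (hγ : constantCoeff (γ X) = 0) (f : R⟦X⟧) :
    constantCoeff (γ f) = constantCoeff f := by
  obtain ⟨g, hg⟩ : X ∣ f - C (constantCoeff f) := by simp [X_dvd_iff]
  rw [sub_eq_iff_eq_add'] at hg
  have hC : γ (C (constantCoeff f)) = C (constantCoeff f) := γ.commutes _
  rw [hg, map_add, map_mul, hC]
  simp [hγ]

theorem coeff_algHom_apply_of_X_pow_dvd (hγ : constantCoeff (γ X) = 0) {j : ℕ} {f : R⟦X⟧}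
    (hf : X ^ j ∣ f) : coeff j (γ f) = coeff 1 (γ X) ^ j * coeff j f := by
  obtain ⟨g, rfl⟩ := hf
  rw [map_mul, map_pow, coeff_pow_mul_of_constantCoeff_eq_zero hγ,
    constantCoeff_algHom_apply hγ]
  congr 1
  simpa using (coeff_X_pow_mul g j 0).symm

theorem X_pow_succ_dvd_of_coeff_algHom_apply_eq [IsDomain R] (hγ : constantCoeff (γ X) = 0)
    {j : ℕ} (hu : coeff 1 (γ X) ^ j ≠ 1) {f : R⟦X⟧} (hf : X ^ j ∣ f)
    (hfix : coeff j (γ f) = coeff j f) : X ^ (j + 1) ∣ f := by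
  have hcoeff : (coeff 1 (γ X) ^ j - 1) * coeff j f = 0 := by
    rw [sub_mul, one_mul, ← coeff_algHom_apply_of_X_pow_dvd hγ hf, hfix, sub_self]
  have hj : coeff j f = 0 := (mul_eq_zero.mp hcoeff).resolve_left (sub_ne_zero.mpr hu)
  rw [X_pow_dvd_iff] at hf ⊢
  intro m hm
  rcases Nat.lt_succ_iff_lt_or_eq.mp hm with hm | rfl
  exacts [hf m hm, hj]

end PowerSeries

theorem PadicInt.pow_ne_one_of_norm_sub_one_lt {p : ℕ} [Fact p.Prime] {v : ℤ_[p]}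
    (hv : ‖v - 1‖ < 1) (hv1 : v ≠ 1) {j : ℕ} (hj : ¬ p ∣ j) : v ^ j ≠ 1 := by
  have hv0 : toZMod v = 1 := by
    rw [← sub_eq_zero, ← map_one toZMod, ← map_sub, ← RingHom.mem_ker, ker_toZMod,
      IsLocalRing.mem_maximalIdeal, mem_nonunits]
    exact hv
  -- `∑ v^i ≡ j ≢ 0 (mod p)`, so the geometric sum does not vanish
  have hsum : ∑ i ∈ Finset.range j, v ^ i ≠ 0 := by
    intro h
    apply_fun toZMod at h
    simp only [map_sum, map_pow, hv0, one_pow, Finset.sum_const, Finset.card_range,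
      nsmul_eq_mul, mul_one, map_zero] at h
    exact hj ((ZMod.natCast_eq_zero_iff j p).mp h)
  rw [ne_eq, ← sub_eq_zero, ← geom_sum_mul]
  exact mul_ne_zero hsum (sub_ne_zero.mpr hv1)

theorem Padic.pow_ne_one_of_norm_sub_one_lt {p : ℕ} [Fact p.Prime] {u : ℚ_[p]}
    (hu : ‖u - 1‖ < 1) (hu1 : u ≠ 1) {j : ℕ} (hj : ¬ p ∣ j) : u ^ j ≠ 1 := by
  have hnorm : ‖u‖ ≤ 1 := by
    simpa using (Padic.nonarchimedean (u - 1) 1).trans (max_le hu.le (by simp))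
  have := PadicInt.pow_ne_one_of_norm_sub_one_lt (v := ⟨u, hnorm⟩) hu
    (fun h => hu1 (congrArg Subtype.val h)) hj
  exact fun h => this (PadicInt.ext h)

namespace Matrix

variable {n R : Type*} [DecidableEq n] [CommRing R]

theorem exists_eq_one_add_smul_iff_dvd {A : Matrix n n R} {c : R} :
    (∃ N, A = 1 + c • N) ↔ ∀ a b, c ∣ (A - 1) a b := by
  constructor
  · rintro ⟨N, rfl⟩ a b
    simp
  · intro h
    choose N hN using h
    refine ⟨of N, ext fun a b => ?_⟩
    simp [← hN]

theorem dvd_sub_of_mul_one_add_smul_eq [Fintype n] {A B N : Matrix n n R} {c : R}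
    (h : A * (1 + c • N) = B) (a b : n) : c ∣ (A - B) a b :=
  ⟨-(A * N) a b, by simp [← h, mul_add]⟩

theorem map_constantCoeff_eq_one_iff {A : Matrix n n R⟦X⟧} :
    A.map constantCoeff = 1 ↔ ∀ a b, X ∣ (A - 1) a b := by
  have hsub : (A - 1).map constantCoeff = A.map constantCoeff - 1 := by
    rw [Matrix.map_sub _ (map_sub _), Matrix.map_one _ (map_zero _) (map_one _)]
  rw [← sub_eq_zero, ← hsub, ← Matrix.ext_iff]
  simp [X_dvd_iff]

theorem map_constantCoeff_eq_one_of_mul_eq_smul_one [Fintype n] {A B : Matrix n n R⟦X⟧}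
    {c : R⟦X⟧} (hB : B.map constantCoeff = 1) (hc : constantCoeff c = 1) (h : A * B = c • 1) :
    A.map constantCoeff = 1 := by
  have h0 := congrArg (constantCoeff (R := R)).mapMatrix h
  simp only [map_mul, RingHom.mapMatrix_apply, hB, mul_one] at h0
  rw [h0]
  ext a b
  rcases eq_or_ne a b with rfl | hab
  · simp [hc]
  · simp [hab]

theorem X_pow_succ_dvd_sub_one_of_dvd_map_algHom_sub [IsDomain R]
    {γ : R⟦X⟧ →ₐ[R] R⟦X⟧} (hγ : constantCoeff (γ X) = 0) {j m : ℕ}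
    (hu : coeff 1 (γ X) ^ j ≠ 1) (hjm : j < m) {A : Matrix n n R⟦X⟧}
    (hA : ∀ a b, X ^ j ∣ (A - 1) a b) (hfix : ∀ a b, X ^ m ∣ (A.map γ - A) a b) (a b : n) :
    X ^ (j + 1) ∣ (A - 1) a b := by
  refine X_pow_succ_dvd_of_coeff_algHom_apply_eq hγ hu (hA a b) ?_
  have hsub : γ ((A - 1) a b) - (A - 1) a b = (A.map γ - A) a b := by
    simp [Matrix.one_apply, apply_ite γ]
  rw [← sub_eq_zero, ← map_sub, hsub]
  exact X_pow_dvd_iff.mp (hfix a b) j hjm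

end Matrix

theorem stmt19_general (p : ℕ) [Fact p.Prime] (d r : ℕ)
    (hr1 : 1 ≤ r)
    (u : ℚ_[p]) (hu : ‖u - 1‖ ≤ (p : ℝ)⁻¹) (hune : u ≠ 1)
    (γ : PowerSeries ℚ_[p] →ₐ[ℚ_[p]] PowerSeries ℚ_[p])
    (hγ : γ X = onePlusXPow p u - 1)
    (M M' Gγ : Matrix (Fin d) (Fin d) (PowerSeries ℚ_[p]))
    (hM : ∃ N : Matrix (Fin d) (Fin d) (PowerSeries ℚ_[p]),
      M = 1 + (X : PowerSeries ℚ_[p]) ^ r • N)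
    (hM' : M' * M = (tDivPi p) ^ r • (1 : Matrix (Fin d) (Fin d) (PowerSeries ℚ_[p])))
    (hGγ : ∃ N : Matrix (Fin d) (Fin d) (PowerSeries ℚ_[p]),
      (∀ a b : Fin d, ∀ k : ℕ, ‖PowerSeries.coeff k (N a b)‖ ≤ 1) ∧
        Gγ = 1 + (X : PowerSeries ℚ_[p]) ^ (p - 1) • N)
    (hrel : M'.map ⇑γ * Gγ = M') :
    (∀ j : ℕ, 1 ≤ j → j ≤ p - 2 →
      (∃ N, M' = 1 + (X : PowerSeries ℚ_[p]) ^ j • N) →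
      ∃ N, M' = 1 + (X : PowerSeries ℚ_[p]) ^ (j + 1) • N) ∧
    (∃ N, M' = 1 + (X : PowerSeries ℚ_[p]) ^ (p - 1) • N) := by
  obtain ⟨NG, -, rfl⟩ := hGγ
  have hp1 : 1 < p := (Fact.out : p.Prime).one_lt
  have hγ0 : constantCoeff (γ X) = 0 := by
    simp [hγ, onePlusXPow, padicBinom, ← coeff_zero_eq_constantCoeff]
  have hγ1 : coeff 1 (γ X) = u := by simp [hγ, onePlusXPow, padicBinom]
  have hu1 : ‖u - 1‖ < 1 := hu.trans_lt (inv_lt_one_of_one_lt₀ (by exact_mod_cast hp1))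
  have step (j : ℕ) (hj1 : 1 ≤ j) (hj2 : j ≤ p - 2) :
      (∃ N, M' = 1 + (X : PowerSeries ℚ_[p]) ^ j • N) →
      ∃ N, M' = 1 + (X : PowerSeries ℚ_[p]) ^ (j + 1) • N := by
    have hu : coeff 1 (γ X) ^ j ≠ 1 := hγ1 ▸
      Padic.pow_ne_one_of_norm_sub_one_lt hu1 hune (Nat.not_dvd_of_pos_of_lt hj1 (by omega))
    simp only [Matrix.exists_eq_one_add_smul_iff_dvd]
    exact fun hj => Matrix.X_pow_succ_dvd_sub_one_of_dvd_map_algHom_sub hγ0 hu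
      (by omega : j < p - 1) hj (Matrix.dvd_sub_of_mul_one_add_smul_eq hrel)
  have base : ∃ N, M' = 1 + (X : PowerSeries ℚ_[p]) ^ 1 • N := by
    rw [Matrix.exists_eq_one_add_smul_iff_dvd] at hM
    rw [pow_one, Matrix.exists_eq_one_add_smul_iff_dvd, ← Matrix.map_constantCoeff_eq_one_iff]
    refine Matrix.map_constantCoeff_eq_one_of_mul_eq_smul_one ?_ (by simp [tDivPi]) hM'
    exact Matrix.map_constantCoeff_eq_one_iff.mpr fun a b =>
      (dvd_pow_self X (by omega)).trans (hM a b)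
  refine ⟨step, ?_⟩
  have hall (k : ℕ) (hk : 1 ≤ k) : k ≤ p - 1 →
      ∃ N, M' = 1 + (X : PowerSeries ℚ_[p]) ^ k • N := by
    induction k, hk using Nat.le_induction with
    | base => exact fun _ => base
    | succ k hk ih => exact fun hkp => step k hk (by omega) (ih (by omega))
  exact hall (p - 1) (by omega) le_rfl

/-- Let `M` be a `d×d` matrix over `B⁺_rig` congruent to the identity
modulo `π^r` (`1 ≤ r ≤ p−1`), and suppose `M' = (t/π)^r·M⁻¹` has entries in `B⁺_rig` and
satisfies `γ(M')·G_γ = M'` for some `G_γ ∈ I_d + π^{p−1} M_{d×d}(A⁺)` (entries with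
integral coefficients), where `γ` acts as the `ℚ_p`-algebra map with
`γ(π) = (1+π)^{χ(γ)} − 1`, `χ(γ) = u ∈ 1 + pℤ_p` a topological generator (`u ≠ 1`).
If `M' ≡ I_d (mod π^j)` for some `1 ≤ j ≤ p−2`, then `M' ≡ I_d (mod π^{j+1})`;
consequently `M' ≡ I_d (mod π^{p−1})`. -/
theorem stmt19 (p : ℕ) [Fact p.Prime] (hp : Odd p) (d r : ℕ)
    (hr1 : 1 ≤ r) (hr2 : r ≤ p - 1)
    (u : ℚ_[p]) (hu : ‖u - 1‖ ≤ (p : ℝ)⁻¹) (hune : u ≠ 1)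
    (γ : PowerSeries ℚ_[p] →ₐ[ℚ_[p]] PowerSeries ℚ_[p])
    (hγ : γ X = onePlusXPow p u - 1)
    (M M' Gγ : Matrix (Fin d) (Fin d) (PowerSeries ℚ_[p]))
    (hM : ∃ N : Matrix (Fin d) (Fin d) (PowerSeries ℚ_[p]),
      M = 1 + (X : PowerSeries ℚ_[p]) ^ r • N)
    (hM' : M' * M = (tDivPi p) ^ r • (1 : Matrix (Fin d) (Fin d) (PowerSeries ℚ_[p])))
    (hGγ : ∃ N : Matrix (Fin d) (Fin d) (PowerSeries ℚ_[p]),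
      (∀ a b : Fin d, ∀ k : ℕ, ‖PowerSeries.coeff k (N a b)‖ ≤ 1) ∧
        Gγ = 1 + (X : PowerSeries ℚ_[p]) ^ (p - 1) • N)
    (hrel : M'.map ⇑γ * Gγ = M') :
    (∀ j : ℕ, 1 ≤ j → j ≤ p - 2 →
      (∃ N, M' = 1 + (X : PowerSeries ℚ_[p]) ^ j • N) →
      ∃ N, M' = 1 + (X : PowerSeries ℚ_[p]) ^ (j + 1) • N) ∧
    (∃ N, M' = 1 + (X : PowerSeries ℚ_[p]) ^ (p - 1) • N) :=
  stmt19_general p d r hr1 u hu hune γ hγ M M' Gγ hM hM' hGγ hrel
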